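/- Let Y be a real-valued random variable with all absolute moments finite and fix a nonzero real λ. Then for every real number x and every integer n≥0, (1/2)(Σ_{l=0}^{n} C(n,l) 𝓔_{l,λ}^Y(x) E[(Y)_{n−l,λ}] + 𝓔_{n,λ}^Y(x)) = Σ_{k=0}^{n} ⟨x⟩_{k,λ} (−1)^{n−k} S_{1,λ}^Y(n,k) = Σ_{k=0}^{n} (x)_{k,λ} Σ_{m=k}^{n} S_{1,λ}(m,k) {n brace m}_{Y,λ}, where C(n,l) is the binomial coefficient. -/

import Mathlib

/-!
Everything reduces to the binomial series `B_y = Σ (y)_n X^n/n! = (1 + X)^y`, which is the unique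
power series with `(1 + X) B_y' = y B_y` and constant term `1`. This ODE shows that
`exp (y log (1 + X)) = B_y` and `B_a ∘ (B_b - 1) = B_{ab}`. Hence `F^x = B_x ∘ (F - 1)`; expanding
`(x)_m` in degenerate falling factorials gives the second identity. With `c = -λ`,
`c G_Y = B_c ∘ (F - 1) - 1`, so `F^x = B_{x/c} ∘ (c G_Y) = Σ ⟨x⟩_{k,λ} G_Y^k/k!`, the first one.
The left-hand side is `n!·[X^n] F^x` because the Euler series `E` satisfies `E (F + 1) = 2 F^x`.
-/

open MeasureTheory Finset

noncomputable section

/-- The degenerate falling factorial `(x)_{n,λ} = x(x-λ)⋯(x-(n-1)λ)`. -/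
def dff (lam x : ℝ) (n : ℕ) : ℝ := ∏ i ∈ Finset.range n, (x - i * lam)

/-- The degenerate rising factorial `⟨x⟩_{n,λ} = x(x+λ)⋯(x+(n-1)λ)`. -/
def drf (lam x : ℝ) (n : ℕ) : ℝ := ∏ i ∈ Finset.range n, (x + i * lam)

/-- The ordinary falling factorial `(x)_n = x(x-1)⋯(x-n+1)`. -/
def ffall (x : ℝ) (n : ℕ) : ℝ := ∏ i ∈ Finset.range n, (x - i)

/-- The ordinary rising factorial `⟨x⟩_n = x(x+1)⋯(x+n-1)`. -/
def frise (x : ℝ) (n : ℕ) : ℝ := ∏ i ∈ Finset.range n, (x + i)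

/-- Composition `f ∘ g` of formal power series, valid when `g` has zero constant term. -/
def pscomp (f g : PowerSeries ℝ) : PowerSeries ℝ :=
  PowerSeries.mk fun n =>
    ∑ k ∈ Finset.range (n + 1), PowerSeries.coeff (R := ℝ) k f * PowerSeries.coeff (R := ℝ) n (g ^ k)

/-- The degenerate moment generating series `F_Y = Σ_{n≥0} E[(Y)_{n,λ}] X^n/n!`. -/
def momSeries (lam : ℝ) {Ω : Type*} [MeasurableSpace Ω] (μ : Measure Ω) (Y : Ω → ℝ) :
    PowerSeries ℝ :=
  PowerSeries.mk fun n => (∫ ω, dff lam (Y ω) n ∂μ) / (n.factorial : ℝ)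

/-- Taylor series at `u = 0` of the degenerate logarithm `log_λ(1+u)`:
`Σ_{n≥1} λ^{n-1} (1)_{n,1/λ} u^n/n!`. -/
def degLogSeries (lam : ℝ) : PowerSeries ℝ :=
  PowerSeries.mk fun n => if n = 0 then 0 else lam ^ (n - 1) * dff (1 / lam) 1 n / (n.factorial : ℝ)

/-- `G_Y`, the degenerate cumulant generating series `log_{-λ}(F_Y)`, i.e. the substitution of
`F_Y - 1` into the Taylor series of `log_{-λ}(1+u)`. -/
def cumSeries (lam : ℝ) {Ω : Type*} [MeasurableSpace Ω] (μ : Measure Ω) (Y : Ω → ℝ) :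
    PowerSeries ℝ :=
  pscomp (degLogSeries (-lam)) (momSeries lam μ Y - 1)

/-- The degenerate cumulants `κ_{n,λ}(Y) := n!·(coefficient of X^n in G_Y)`. -/
def degCumulant (lam : ℝ) {Ω : Type*} [MeasurableSpace Ω] (μ : Measure Ω) (Y : Ω → ℝ)
    (n : ℕ) : ℝ :=
  (n.factorial : ℝ) * PowerSeries.coeff (R := ℝ) n (cumSeries lam μ Y)

/-- The probabilistic degenerate Stirling numbers of the second kind
`{n brace k}_{Y,λ} := n!·(coefficient of X^n in (F_Y - 1)^k/k!)`. -/
def braceY (lam : ℝ) {Ω : Type*} [MeasurableSpace Ω] (μ : Measure Ω) (Y : Ω → ℝ)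
    (n k : ℕ) : ℝ :=
  (n.factorial : ℝ) * PowerSeries.coeff (R := ℝ) n ((momSeries lam μ Y - 1) ^ k) / (k.factorial : ℝ)

/-- The probabilistic degenerate Stirling numbers of the first kind, defined by
`(-1)^{n-k} S_{1,λ}^Y(n,k) := n!·(coefficient of X^n in G_Y^k/k!)`. -/
def S1Y (lam : ℝ) {Ω : Type*} [MeasurableSpace Ω] (μ : Measure Ω) (Y : Ω → ℝ)
    (n k : ℕ) : ℝ :=
  (-1 : ℝ) ^ (n - k) * ((n.factorial : ℝ) * PowerSeries.coeff (R := ℝ) n ((cumSeries lam μ Y) ^ k) / (k.factorial : ℝ))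

/-- Taylor series of `log(1+u)`: `Σ_{n≥1} (-1)^{n-1} u^n/n`. -/
def logSeries : PowerSeries ℝ :=
  PowerSeries.mk fun n => if n = 0 then 0 else (-1 : ℝ) ^ (n - 1) / n

/-- `F^x := exp (x · Log F)` for a power series `F` with constant term `1`. -/
def psPow (F : PowerSeries ℝ) (x : ℝ) : PowerSeries ℝ :=
  pscomp (PowerSeries.exp ℝ) (PowerSeries.C (R := ℝ) x * pscomp logSeries (F - 1))

/-- `F ↦ F/X`, i.e. the shift sending `Σ a_{n+1} X^{n+1}` (with `a_0 = 0`) to `Σ a_{n+1} X^n`. -/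
def shiftDown (F : PowerSeries ℝ) : PowerSeries ℝ :=
  PowerSeries.mk fun n => PowerSeries.coeff (R := ℝ) (n + 1) F

/-- The probabilistic degenerate Bernoulli polynomials associated with `Y`:
`Σ_{n≥0} β_{n,λ}^Y(x) X^n/n! = (X/(F_Y-1))·F_Y^x`. -/
def probBernoulli (lam : ℝ) {Ω : Type*} [MeasurableSpace Ω] (μ : Measure Ω) (Y : Ω → ℝ)
    (n : ℕ) (x : ℝ) : ℝ :=
  (n.factorial : ℝ) *
    PowerSeries.coeff (R := ℝ) n ((shiftDown (momSeries lam μ Y - 1))⁻¹ * psPow (momSeries lam μ Y) x)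

/-- The probabilistic degenerate Euler polynomials associated with `Y`:
`Σ_{n≥0} 𝓔_{n,λ}^Y(x) X^n/n! = (2/(F_Y+1))·F_Y^x`. -/
def probEuler (lam : ℝ) {Ω : Type*} [MeasurableSpace Ω] (μ : Measure Ω) (Y : Ω → ℝ)
    (n : ℕ) (x : ℝ) : ℝ :=
  (n.factorial : ℝ) *
    PowerSeries.coeff (R := ℝ) n
      (PowerSeries.C (R := ℝ) 2 * (momSeries lam μ Y + 1)⁻¹ * psPow (momSeries lam μ Y) x)

open PowerSeries

section Substitution

lemma coeff_subst_eq_sum {g : ℝ⟦X⟧} (hg : constantCoeff g = 0) (f : ℝ⟦X⟧) (n : ℕ) :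
    coeff n (f.subst g) = ∑ k ∈ range (n + 1), coeff k f * coeff n (g ^ k) := by
  rw [coeff_subst' (HasSubst.of_constantCoeff_zero' hg)]
  refine finsum_eq_sum_of_support_subset _ fun k hk => ?_
  by_contra hkn
  refine hk ?_
  have hlt : (n : ℕ∞) < (g ^ k).order :=
    (Nat.cast_lt.2 (by simpa using hkn)).trans_le (le_order_pow_of_constantCoeff_eq_zero k hg)
  simp only [coeff_of_lt_order n hlt, smul_zero]

lemma pscomp_eq_subst {g : ℝ⟦X⟧} (hg : constantCoeff g = 0) (f : ℝ⟦X⟧) :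
    pscomp f g = f.subst g := by
  ext n
  rw [coeff_subst_eq_sum hg, pscomp, coeff_mk]

lemma constantCoeff_subst_of_constantCoeff_zero {g : ℝ⟦X⟧} (hg : constantCoeff g = 0)
    (f : ℝ⟦X⟧) : constantCoeff (f.subst g) = constantCoeff f := by
  rw [← coeff_zero_eq_constantCoeff_apply, ← coeff_zero_eq_constantCoeff_apply,
    coeff_subst_eq_sum hg]
  simp

lemma subst_C_mul {g : ℝ⟦X⟧} (hg : constantCoeff g = 0) (a : ℝ) (f : ℝ⟦X⟧) :
    (C a * f).subst g = C a * f.subst g := by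
  rw [← smul_eq_C_mul, ← smul_eq_C_mul, subst_smul (HasSubst.of_constantCoeff_zero' hg)]

lemma one_add_X_subst {g : ℝ⟦X⟧} (hg : constantCoeff g = 0) :
    (1 + X : ℝ⟦X⟧).subst g = 1 + g := by
  have hg' := HasSubst.of_constantCoeff_zero' hg
  rw [subst_add hg', subst_X hg', ← coe_substAlgHom hg', map_one]

lemma coeff_subst_C_mul {g : ℝ⟦X⟧} (hg : constantCoeff g = 0) (c : ℝ) (f : ℝ⟦X⟧) (n : ℕ) :
    coeff n (f.subst (C c * g)) = ∑ k ∈ range (n + 1), c ^ k * coeff k f * coeff n (g ^ k) := by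
  rw [coeff_subst_eq_sum (by simp [hg])]
  refine sum_congr rfl fun k _ => ?_
  rw [mul_pow, ← map_pow, coeff_C_mul]
  ring

lemma derivative_C_mul (a : ℝ) (f : ℝ⟦X⟧) : d⁄dX ℝ (C a * f) = C a * d⁄dX ℝ f := by
  rw [Derivation.leibniz, derivative_C, smul_zero, add_zero, smul_eq_mul]

lemma coeff_one_add_X_mul_derivative (f : ℝ⟦X⟧) (n : ℕ) :
    coeff n ((1 + X) * d⁄dX ℝ f) = coeff (n + 1) f * (n + 1) + coeff n f * n := by
  rw [add_mul, one_mul, map_add, coeff_derivative]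
  rcases n with _ | n
  · simp
  · rw [coeff_succ_X_mul, coeff_derivative]
    push_cast
    ring

lemma sum_choose_mul_factorial_mul_coeff (A B : ℝ⟦X⟧) (n : ℕ) :
    ∑ l ∈ range (n + 1), (n.choose l : ℝ) * ((l.factorial : ℝ) * coeff l A) *
        (((n - l).factorial : ℝ) * coeff (n - l) B) =
      n.factorial * coeff n (A * B) := by
  rw [coeff_mul, Nat.sum_antidiagonal_eq_sum_range_succ_mk, mul_sum]
  refine sum_congr rfl fun l hl => ?_
  have hfac : (n.choose l : ℝ) * l.factorial * (n - l).factorial = n.factorial := by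
    exact_mod_cast Nat.choose_mul_factorial_mul_factorial (Nat.lt_succ_iff.1 (mem_range.1 hl))
  linear_combination (coeff l A * coeff (n - l) B) * hfac

end Substitution

section Factorials

lemma ffall_succ (y : ℝ) (n : ℕ) : ffall y (n + 1) = ffall y n * (y - n) :=
  prod_range_succ _ n

lemma ffall_eq_dff_one (y : ℝ) (k : ℕ) : ffall y k = dff 1 y k := by
  simp [ffall, dff]

lemma drf_eq_dff_neg (lam x : ℝ) (k : ℕ) : drf lam x k = dff (-lam) x k := by
  simp [drf, dff]

lemma dff_mul_pow (a x c : ℝ) (k : ℕ) : dff a x k * c ^ k = dff (a * c) (x * c) k := by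
  have h : ∏ i ∈ range k, (x * c - i * (a * c)) = ∏ i ∈ range k, ((x - i * a) * c) :=
    prod_congr rfl fun i _ => by ring
  rw [dff, dff, h, prod_mul_distrib, prod_const, card_range]

lemma ffall_div_mul_pow {c : ℝ} (hc : c ≠ 0) (x : ℝ) (k : ℕ) :
    ffall (x / c) k * c ^ k = dff c x k := by
  rw [ffall_eq_dff_one, dff_mul_pow, one_mul, div_mul_cancel₀ x hc]

end Factorials

section BinomialSeries

/-- The binomial series `(1 + X) ^ y`. -/
def binomSeries (y : ℝ) : ℝ⟦X⟧ := mk fun n => ffall y n / n.factorial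

lemma constantCoeff_binomSeries (y : ℝ) : constantCoeff (binomSeries y) = 1 := by
  rw [← coeff_zero_eq_constantCoeff_apply]
  simp [binomSeries, ffall]

lemma one_add_X_mul_derivative_binomSeries (y : ℝ) :
    (1 + X) * d⁄dX ℝ (binomSeries y) = C y * binomSeries y := by
  ext n
  rw [coeff_one_add_X_mul_derivative, coeff_C_mul]
  simp only [binomSeries, coeff_mk, ffall_succ, Nat.factorial_succ]
  push_cast
  field_simp
  ring

lemma eq_binomSeries_of_one_add_X_mul_derivative {y : ℝ} {f : ℝ⟦X⟧}
    (hf : (1 + X) * d⁄dX ℝ f = C y * f) (h0 : constantCoeff f = 1) : f = binomSeries y := by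
  ext n
  induction n with
  | zero => simp [h0, constantCoeff_binomSeries]
  | succ n ih =>
    have hrec := congrArg (coeff n) hf
    rw [coeff_one_add_X_mul_derivative, coeff_C_mul, ih] at hrec
    simp only [binomSeries, coeff_mk, ffall_succ, Nat.factorial_succ] at hrec ⊢
    push_cast at hrec ⊢
    field_simp at hrec ⊢
    linear_combination hrec

lemma one_add_X_mul_derivative_log : (1 + X) * d⁄dX ℝ (log ℝ) = 1 := by
  ext n
  rw [coeff_one_add_X_mul_derivative]
  rcases n with _ | n
  · simp
  · simp [coeff_one]
    field_simp
    ring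

lemma exp_subst_C_mul_log (y : ℝ) : (exp ℝ).subst (C y * log ℝ) = binomSeries y := by
  have hw : constantCoeff (C y * log ℝ) = 0 := by simp
  apply eq_binomSeries_of_one_add_X_mul_derivative
  · rw [derivative_subst (HasSubst.of_constantCoeff_zero' hw), derivative_exp, derivative_C_mul]
    linear_combination (C y * (exp ℝ).subst (C y * log ℝ)) * one_add_X_mul_derivative_log
  · rw [constantCoeff_subst_of_constantCoeff_zero hw, constantCoeff_exp]

lemma binomSeries_subst_binomSeries_sub_one (a b : ℝ) :
    (binomSeries a).subst (binomSeries b - 1) = binomSeries (a * b) := by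
  have hg : constantCoeff (binomSeries b - 1) = 0 := by simp [constantCoeff_binomSeries]
  have hg' := HasSubst.of_constantCoeff_zero' hg
  apply eq_binomSeries_of_one_add_X_mul_derivative
  · have hcomp : binomSeries b * (d⁄dX ℝ (binomSeries a)).subst (binomSeries b - 1) =
        C a * (binomSeries a).subst (binomSeries b - 1) := by
      have h := congrArg (subst (binomSeries b - 1)) (one_add_X_mul_derivative_binomSeries a)
      rwa [subst_mul hg', one_add_X_subst hg, add_sub_cancel, subst_C_mul hg] at h
    rw [derivative_subst hg', map_sub, derivative_one, sub_zero, map_mul]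
    linear_combination C b * hcomp + (d⁄dX ℝ (binomSeries a)).subst (binomSeries b - 1) *
      one_add_X_mul_derivative_binomSeries b
  · rw [constantCoeff_subst_of_constantCoeff_zero hg, constantCoeff_binomSeries]

lemma logSeries_eq_log : logSeries = log ℝ := by
  ext n
  rcases n with _ | n
  · simp [logSeries]
  · simp [logSeries, pow_succ]

lemma psPow_eq_binomSeries_subst {F : ℝ⟦X⟧} (hF : constantCoeff F = 1) (x : ℝ) :
    psPow F x = (binomSeries x).subst (F - 1) := by
  have hu : constantCoeff (F - 1) = 0 := by simp [hF]
  have hw : constantCoeff ((C x * log ℝ).subst (F - 1)) = 0 := by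
    rw [constantCoeff_subst_of_constantCoeff_zero hu]
    simp
  rw [psPow, pscomp_eq_subst hu, logSeries_eq_log, ← subst_C_mul hu, pscomp_eq_subst hw,
    ← subst_comp_subst_apply (HasSubst.of_constantCoeff_zero' (by simp))
      (HasSubst.of_constantCoeff_zero' hu), exp_subst_C_mul_log]

lemma degLogSeries_eq {c : ℝ} (hc : c ≠ 0) : degLogSeries c = C c⁻¹ * (binomSeries c - 1) := by
  ext n
  rw [coeff_C_mul, map_sub, coeff_one]
  rcases n with _ | n
  · simp [degLogSeries, binomSeries, ffall]
  · have key : c ^ (n + 1) * dff (1 / c) 1 (n + 1) = ffall c (n + 1) := by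
      rw [mul_comm, dff_mul_pow, ffall_eq_dff_one, one_div_mul_cancel hc, one_mul]
    simp only [degLogSeries, binomSeries, coeff_mk, if_neg n.succ_ne_zero, sub_zero,
      Nat.add_sub_cancel, ← key]
    field_simp
    ring

lemma binomSeries_subst_eq_subst_C_mul_degLogSeries_subst {c : ℝ} (hc : c ≠ 0) (x : ℝ)
    {u : ℝ⟦X⟧} (hu : constantCoeff u = 0) :
    (binomSeries x).subst u = (binomSeries (x / c)).subst (C c * (degLogSeries c).subst u) := by
  have hg : constantCoeff (binomSeries c - 1) = 0 := by simp [constantCoeff_binomSeries]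
  have hrel : C c * (degLogSeries c).subst u = (binomSeries c - 1).subst u := by
    rw [degLogSeries_eq hc, subst_C_mul hu, ← mul_assoc, ← map_mul, mul_inv_cancel₀ hc, map_one,
      one_mul]
  rw [hrel, ← subst_comp_subst_apply (HasSubst.of_constantCoeff_zero' hg)
    (HasSubst.of_constantCoeff_zero' hu), binomSeries_subst_binomSeries_sub_one,
    div_mul_cancel₀ x hc]

end BinomialSeries

section Probabilistic

variable {Ω : Type*} [MeasurableSpace Ω] (μ : Measure Ω) (Y : Ω → ℝ) {lam : ℝ}

lemma constantCoeff_momSeries [IsProbabilityMeasure μ] :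
    constantCoeff (momSeries lam μ Y) = 1 := by
  rw [← coeff_zero_eq_constantCoeff_apply]
  simp [momSeries, dff]

lemma integral_dff_eq_factorial_mul_coeff_momSeries (m : ℕ) :
    ∫ ω, dff lam (Y ω) m ∂μ = m.factorial * coeff m (momSeries lam μ Y) := by
  rw [momSeries, coeff_mk]
  field_simp

lemma probEuler_convolution_eq_factorial_mul_coeff_psPow
    (hF : constantCoeff (momSeries lam μ Y) = 1) (x : ℝ) (n : ℕ) :
    (1 / 2 : ℝ) * ((∑ l ∈ range (n + 1),
        (n.choose l : ℝ) * probEuler lam μ Y l x * (∫ ω, dff lam (Y ω) (n - l) ∂μ)) +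
          probEuler lam μ Y n x) =
      n.factorial * coeff n (psPow (momSeries lam μ Y) x) := by
  set F := momSeries lam μ Y
  set E := C 2 * (F + 1)⁻¹ * psPow F x
  have hinv : (F + 1)⁻¹ * (F + 1) = 1 :=
    PowerSeries.inv_mul_cancel _ (by rw [map_add, hF, map_one]; norm_num)
  have hEF : coeff n (E * F) + coeff n E = 2 * coeff n (psPow F x) := by
    rw [← coeff_C_mul, ← map_add]
    congr 1
    linear_combination (C 2 * psPow F x) * hinv
  have hEuler : ∀ l, probEuler lam μ Y l x = l.factorial * coeff l E := fun _ => rfl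
  simp only [integral_dff_eq_factorial_mul_coeff_momSeries, hEuler]
  rw [sum_choose_mul_factorial_mul_coeff E F n]
  linear_combination (n.factorial / 2 : ℝ) * hEF

lemma factorial_mul_coeff_psPow_eq_sum_S1Y (hlam : lam ≠ 0)
    (hF : constantCoeff (momSeries lam μ Y) = 1) (x : ℝ) (n : ℕ) :
    n.factorial * coeff n (psPow (momSeries lam μ Y) x) =
      ∑ k ∈ range (n + 1), drf lam x k * (-1 : ℝ) ^ (n - k) * S1Y lam μ Y n k := by
  have hu : constantCoeff (momSeries lam μ Y - 1) = 0 := by simp [hF]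
  have hc : -lam ≠ 0 := neg_ne_zero.2 hlam
  have hG : cumSeries lam μ Y = (degLogSeries (-lam)).subst (momSeries lam μ Y - 1) :=
    pscomp_eq_subst hu _
  have hG0 : constantCoeff (cumSeries lam μ Y) = 0 := by
    rw [hG, constantCoeff_subst_of_constantCoeff_zero hu, degLogSeries_eq hc]
    simp [constantCoeff_binomSeries]
  rw [psPow_eq_binomSeries_subst hF, binomSeries_subst_eq_subst_C_mul_degLogSeries_subst hc x hu,
    ← hG, coeff_subst_C_mul hG0, mul_sum]
  refine sum_congr rfl fun k _ => ?_
  have hsign : (-1 : ℝ) ^ (n - k) * (-1) ^ (n - k) = 1 := by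
    rw [← mul_pow]
    norm_num
  have hd := ffall_div_mul_pow hc x k
  rw [← drf_eq_dff_neg] at hd
  simp only [S1Y, binomSeries, coeff_mk]
  linear_combination (n.factorial * coeff n (cumSeries lam μ Y ^ k) / k.factorial) * hd
    - (drf lam x k * n.factorial * coeff n (cumSeries lam μ Y ^ k) / k.factorial) * hsign

lemma factorial_mul_coeff_psPow_eq_sum_braceY (hF : constantCoeff (momSeries lam μ Y) = 1)
    (S1deg : ℕ → ℕ → ℝ)
    (hS1deg : ∀ (x : ℝ) (n : ℕ), ffall x n = ∑ k ∈ range (n + 1), S1deg n k * dff lam x k)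
    (x : ℝ) (n : ℕ) :
    n.factorial * coeff n (psPow (momSeries lam μ Y) x) =
      ∑ k ∈ range (n + 1), dff lam x k * ∑ m ∈ Icc k n, S1deg m k * braceY lam μ Y n m := by
  have hu : constantCoeff (momSeries lam μ Y - 1) = 0 := by simp [hF]
  have hterm : ∀ m, n.factorial *
      (coeff m (binomSeries x) * coeff n ((momSeries lam μ Y - 1) ^ m)) =
        ∑ k ∈ range (m + 1), dff lam x k * (S1deg m k * braceY lam μ Y n m) := by
    intro m
    have h : n.factorial * (coeff m (binomSeries x) * coeff n ((momSeries lam μ Y - 1) ^ m)) =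
        ffall x m * braceY lam μ Y n m := by
      rw [binomSeries, coeff_mk, braceY]
      ring
    rw [h, hS1deg x m, sum_mul]
    exact sum_congr rfl fun k _ => by ring
  rw [psPow_eq_binomSeries_subst hF, coeff_subst_eq_sum hu, mul_sum,
    sum_congr rfl fun m _ => hterm m]
  simp only [range_eq_Ico, mul_sum, ← Ico_add_one_right_eq_Icc]
  exact (sum_Ico_Ico_comm 0 (n + 1) fun k m => dff lam x k * (S1deg m k * braceY lam μ Y n m)).symm

end Probabilistic

theorem probEuler_convolution_eq_sum_S1Y_eq_sum_degStirling1_braceY_general {Ω : Type*} [MeasurableSpace Ω] (μ : MeasureTheory.Measure Ω)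
    [MeasureTheory.IsProbabilityMeasure μ] (Y : Ω → ℝ)
    (lam : ℝ) (hlam : lam ≠ 0)
    (S1deg : ℕ → ℕ → ℝ)
    (hS1deg : ∀ (x : ℝ) (n : ℕ),
      ffall x n = ∑ k ∈ Finset.range (n + 1), S1deg n k * dff lam x k)
    (x : ℝ) (n : ℕ) :
    (1 / 2 : ℝ) *
          ((∑ l ∈ Finset.range (n + 1),
              (n.choose l : ℝ) * probEuler lam μ Y l x * (∫ ω, dff lam (Y ω) (n - l) ∂μ)) +
            probEuler lam μ Y n x) =
        ∑ k ∈ Finset.range (n + 1), drf lam x k * (-1 : ℝ) ^ (n - k) * S1Y lam μ Y n k ∧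
      (1 / 2 : ℝ) *
          ((∑ l ∈ Finset.range (n + 1),
              (n.choose l : ℝ) * probEuler lam μ Y l x * (∫ ω, dff lam (Y ω) (n - l) ∂μ)) +
            probEuler lam μ Y n x) =
        ∑ k ∈ Finset.range (n + 1), dff lam x k *
          ∑ m ∈ Finset.Icc k n, S1deg m k * braceY lam μ Y n m := by
  have hF : constantCoeff (momSeries lam μ Y) = 1 := constantCoeff_momSeries μ Y
  rw [probEuler_convolution_eq_factorial_mul_coeff_psPow μ Y hF]
  exact ⟨factorial_mul_coeff_psPow_eq_sum_S1Y μ Y hlam hF x n,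
    factorial_mul_coeff_psPow_eq_sum_braceY μ Y hF S1deg hS1deg x n⟩

theorem probEuler_convolution_eq_sum_S1Y_eq_sum_degStirling1_braceY {Ω : Type*} [MeasurableSpace Ω] (μ : MeasureTheory.Measure Ω)
    [MeasureTheory.IsProbabilityMeasure μ] (Y : Ω → ℝ) (hY : Measurable Y)
    (hmom : ∀ n : ℕ, MeasureTheory.Integrable (fun ω => |Y ω| ^ n) μ)
    (lam : ℝ) (hlam : lam ≠ 0)
    (S1deg : ℕ → ℕ → ℝ)
    (hS1deg : ∀ (x : ℝ) (n : ℕ),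
      ffall x n = ∑ k ∈ Finset.range (n + 1), S1deg n k * dff lam x k)
    (x : ℝ) (n : ℕ) :
    (1 / 2 : ℝ) *
          ((∑ l ∈ Finset.range (n + 1),
              (n.choose l : ℝ) * probEuler lam μ Y l x * (∫ ω, dff lam (Y ω) (n - l) ∂μ)) +
            probEuler lam μ Y n x) =
        ∑ k ∈ Finset.range (n + 1), drf lam x k * (-1 : ℝ) ^ (n - k) * S1Y lam μ Y n k ∧
      (1 / 2 : ℝ) *
          ((∑ l ∈ Finset.range (n + 1),
              (n.choose l : ℝ) * probEuler lam μ Y l x * (∫ ω, dff lam (Y ω) (n - l) ∂μ)) +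
            probEuler lam μ Y n x) =
        ∑ k ∈ Finset.range (n + 1), dff lam x k *
          ∑ m ∈ Finset.Icc k n, S1deg m k * braceY lam μ Y n m :=
  probEuler_convolution_eq_sum_S1Y_eq_sum_degStirling1_braceY_general μ Y lam hlam S1deg hS1deg x n

end
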